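/- arXiv:2412.07925 — 4 statements merged into one kernel-verified Lean document; each statement's English description precedes it below -/
import Mathlib

section
/- Let I ⊆ ℝ be an open interval, n ≥ 1, c = (c_0,...,c_n) ∈ ℂ^{n+1} with c_n = 1, D_c the operator D_c(f) = Σ_{k=0}^n c_k f^(k), and ω_c its characteristic solution (D_c ω_c = 0, ω_c^(ℓ)(0) = δ_{ℓ,n-1}). Fix a ∈ I. Then for every f ∈ C^n(I, ℂ) and x ∈ I: f(x) = Σ_{β=0}^{n-1} f^(β)(a) · (Σ_{i=0}^{n-1-β} c_{i+β+1} ω_c^(i)(x−a)) + ∫_a^x (D_c f)(t) · ω_c(x−t) dt. -/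
/-!
The function `F t = ∑_{β<n} f^(β)(t) · ∑_{i<n-β} c_{i+β+1} ω_c^(i)(x - t)` has derivative
`(D_c f)(t) · ω_c(x - t)`: in the product rule the terms telescope, and the one left over,
`-c_0 f(t) ω_c(x - t)`, is rewritten through the equation `D_c ω_c = 0`. Hence the integral
equals `F x - F a`, and `F x = f x` because the initial conditions of `ω_c` make the inner sum at
`t = x` equal to `δ_{β,0}`.
-/

open Finset intervalIntegral

section Algebra

variable {R : Type*} [CommRing R]

/-- With `W i = ω_c^(i)(x - a)`, this is the weight of `f^(β)(a)` in the Taylor formula. -/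
def taylorWeight (c : ℕ → R) (n β : ℕ) (W : ℕ → R) : R :=
  ∑ i ∈ range (n - β), c (i + β + 1) * W i

variable (c : ℕ → R) (n : ℕ) (W : ℕ → R)

theorem taylorWeight_self : taylorWeight c n n W = 0 := by
  simp [taylorWeight]

theorem taylorWeight_eq_add {β : ℕ} (hβ : β < n) :
    taylorWeight c n β W = c (β + 1) * W 0 + taylorWeight c n (β + 1) (fun i => W (i + 1)) := by
  obtain ⟨m, hm⟩ : ∃ m, n - β = m + 1 := ⟨n - β - 1, by omega⟩
  rw [taylorWeight, taylorWeight, hm, sum_range_succ', show n - (β + 1) = m by omega, add_comm]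
  simp only [zero_add]
  exact congrArg _ (sum_congr rfl fun i _ => by rw [add_right_comm i 1 β, add_assoc i β 1])

theorem taylorWeight_zero_shift (hW : ∑ k ∈ range (n + 1), c k * W k = 0) :
    taylorWeight c n 0 (fun i => W (i + 1)) = -(c 0 * W 0) := by
  rw [sum_range_succ'] at hW
  simp only [taylorWeight, Nat.sub_zero, add_zero]
  linear_combination hW

theorem sum_mul_taylorWeight_sub (A : ℕ → R) (hW : ∑ k ∈ range (n + 1), c k * W k = 0) :
    ∑ β ∈ range n, (A (β + 1) * taylorWeight c n β W
        - A β * taylorWeight c n β (fun i => W (i + 1)))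
      = (∑ k ∈ range (n + 1), c k * A k) * W 0 := by
  set T := fun β => taylorWeight c n β (fun i => W (i + 1))
  calc _ = ∑ β ∈ range n, (c (β + 1) * A (β + 1) * W 0 + (A (β + 1) * T (β + 1) - A β * T β)) :=
        sum_congr rfl fun β hβ => by
          rw [taylorWeight_eq_add c n W (mem_range.1 hβ)]; ring
    _ = (∑ β ∈ range n, c (β + 1) * A (β + 1)) * W 0 + A n * T n - A 0 * T 0 := by
        rw [sum_add_distrib, sum_range_sub (fun β => A β * T β), sum_mul]; ring
    _ = _ := by
        have hTn : T n = 0 := taylorWeight_self c n _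
        have hT0 : T 0 = -(c 0 * W 0) := taylorWeight_zero_shift c n W hW
        rw [hTn, hT0, sum_range_succ' _ n]; ring

variable {c n W}

theorem taylorWeight_of_initial (hc : c n = 1)
    (hW : ∀ i < n, W i = if i = n - 1 then 1 else 0) {β : ℕ} (hβ : β < n) :
    taylorWeight c n β W = if β = 0 then 1 else 0 := by
  rw [taylorWeight, sum_congr rfl fun i hi => by
    rw [hW i (by simp at hi; omega), mul_ite, mul_one, mul_zero], sum_ite_eq']
  by_cases hβ0 : β = 0
  · subst hβ0
    rw [if_pos (by simp; omega), if_pos rfl, show n - 1 + 0 + 1 = n by omega, hc]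
  · rw [if_neg (by simp; omega), if_neg hβ0]

theorem sum_mul_taylorWeight_of_initial (hn : 0 < n) (hc : c n = 1)
    (hW : ∀ i < n, W i = if i = n - 1 then 1 else 0) (A : ℕ → R) :
    ∑ β ∈ range n, A β * taylorWeight c n β W = A 0 := by
  rw [sum_congr rfl fun β hβ => by
    rw [taylorWeight_of_initial hc hW (mem_range.1 hβ), mul_ite, mul_one, mul_zero],
    sum_ite_eq', if_pos (mem_range.2 hn)]

end Algebra

section Calculus

variable {𝕜 : Type*} [NontriviallyNormedField 𝕜]

theorem hasDerivAt_iteratedDerivWithin_of_isOpen {F : Type*} [NormedAddCommGroup F]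
    [NormedSpace 𝕜 F] {f : 𝕜 → F} {s : Set 𝕜} {N : WithTop ℕ∞} {m : ℕ} {t : 𝕜}
    (hf : ContDiffOn 𝕜 N f s) (hs : IsOpen s) (hm : m < N) (ht : t ∈ s) :
    HasDerivAt (iteratedDerivWithin m f s) (iteratedDerivWithin (m + 1) f s t) t := by
  have hd := (hf.differentiableOn_iteratedDerivWithin hm hs.uniqueDiffOn t ht).differentiableAt
    (hs.mem_nhds ht)
  rw [iteratedDerivWithin_succ, derivWithin_of_isOpen hs ht]
  exact hd.hasDerivAt

theorem ContDiff.hasDerivAt_iteratedDeriv {F : Type*} [NormedAddCommGroup F]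
    [NormedSpace 𝕜 F] {f : 𝕜 → F} {N : WithTop ℕ∞} {m : ℕ} (hf : ContDiff 𝕜 N f) (hm : m < N)
    (t : 𝕜) : HasDerivAt (iteratedDeriv m f) (iteratedDeriv (m + 1) f t) t := by
  rw [iteratedDeriv_succ]
  exact (hf.differentiable_iteratedDeriv m hm t).hasDerivAt

variable {𝔸 : Type*} [NormedCommRing 𝔸] [NormedAlgebra 𝕜 𝔸] {c : ℕ → 𝔸} {n : ℕ}
  {w : ℕ → 𝕜 → 𝔸} {x t : 𝕜}

theorem hasDerivAt_taylorWeight_comp_const_sub (β : ℕ)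
    (hw : ∀ i, HasDerivAt (w i) (w (i + 1) (x - t)) (x - t)) :
    HasDerivAt (fun s => taylorWeight c n β (fun i => w i (x - s)))
      (-taylorWeight c n β (fun i => w (i + 1) (x - t))) t := by
  simp only [taylorWeight, ← sum_neg_distrib, ← mul_neg]
  exact HasDerivAt.fun_sum fun i _ => ((hw i).comp_const_sub x t).const_mul _

theorem hasDerivAt_sum_mul_taylorWeight {g : ℕ → 𝕜 → 𝔸}
    (hg : ∀ β < n, HasDerivAt (g β) (g (β + 1) t) t)
    (hw : ∀ i, HasDerivAt (w i) (w (i + 1) (x - t)) (x - t))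
    (hode : ∑ k ∈ range (n + 1), c k * w k (x - t) = 0) :
    HasDerivAt (fun s => ∑ β ∈ range n, g β s * taylorWeight c n β (fun i => w i (x - s)))
      ((∑ k ∈ range (n + 1), c k * g k t) * w 0 (x - t)) t := by
  rw [← sum_mul_taylorWeight_sub c n (fun i => w i (x - t)) (fun β => g β t) hode]
  refine HasDerivAt.fun_sum fun β hβ => ?_
  exact ((hg β (mem_range.1 hβ)).fun_mul (hasDerivAt_taylorWeight_comp_const_sub β hw)).congr_deriv
    (by ring)

end Calculus

theorem stmt_16_general (I : Set ℝ) (hI : IsOpen I) (hconn : I.OrdConnected)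
    (n : ℕ) (hn : 1 ≤ n) (c : ℕ → ℂ) (hc : c n = 1)
    (ωc : ℝ → ℂ) (hωc : ContDiff ℝ ⊤ ωc)
    (hode : ∀ t : ℝ, ∑ k ∈ Finset.range (n + 1), c k * iteratedDeriv k ωc t = 0)
    (hinit : ∀ ℓ < n, iteratedDeriv ℓ ωc 0 = if ℓ = n - 1 then 1 else 0)
    (a : ℝ) (ha : a ∈ I) :
    ∀ f : ℝ → ℂ, ContDiffOn ℝ (n : ℕ∞) f I → ∀ x ∈ I,
      f x = (∑ β ∈ Finset.range n, iteratedDerivWithin β f I a *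
              ∑ i ∈ Finset.range (n - β), c (i + β + 1) * iteratedDeriv i ωc (x - a))
            + ∫ t in a..x,
                (∑ k ∈ Finset.range (n + 1), c k * iteratedDerivWithin k f I t)
                  * ωc (x - t) := by
  intro f hf x hx
  have hsub : Set.uIcc a x ⊆ I := hconn.uIcc_subset ha hx
  have hderiv : ∀ t ∈ I, HasDerivAt
      (fun s => ∑ β ∈ range n, iteratedDerivWithin β f I s *
        taylorWeight c n β (fun i => iteratedDeriv i ωc (x - s)))
      ((∑ k ∈ range (n + 1), c k * iteratedDerivWithin k f I t) * ωc (x - t)) t := fun t ht => by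
    simpa only [iteratedDeriv_zero] using hasDerivAt_sum_mul_taylorWeight
      (fun β hβ => hasDerivAt_iteratedDerivWithin_of_isOpen (m := β) hf hI (mod_cast hβ) ht)
      (fun i => hωc.hasDerivAt_iteratedDeriv (m := i) (mod_cast WithTop.coe_lt_top (i : ℕ∞)) _)
      (hode (x - t))
  have hcont : ContinuousOn (fun t => (∑ k ∈ range (n + 1), c k * iteratedDerivWithin k f I t)
      * ωc (x - t)) (Set.uIcc a x) := by
    refine ContinuousOn.mul ((continuousOn_finsetSum _ fun k hk => ?_).mono hsub)
      (hωc.continuous.comp (continuous_sub_left x)).continuousOn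
    exact continuousOn_const.mul (hf.continuousOn_iteratedDerivWithin
      (mod_cast Nat.lt_succ_iff.1 (mem_range.1 hk)) hI.uniqueDiffOn)
  rw [integral_eq_sub_of_hasDerivAt (fun t ht => hderiv t (hsub ht)) hcont.intervalIntegrable,
    sub_self, sum_mul_taylorWeight_of_initial hn hc hinit, iteratedDerivWithin_zero]
  simp only [taylorWeight]
  ring

theorem stmt_16 (I : Set ℝ) (hI : IsOpen I) (hne : I.Nonempty) (hconn : I.OrdConnected)
    (n : ℕ) (hn : 1 ≤ n) (c : ℕ → ℂ) (hc : c n = 1)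
    (ωc : ℝ → ℂ) (hωc : ContDiff ℝ ⊤ ωc)
    (hode : ∀ t : ℝ, ∑ k ∈ Finset.range (n + 1), c k * iteratedDeriv k ωc t = 0)
    (hinit : ∀ ℓ < n, iteratedDeriv ℓ ωc 0 = if ℓ = n - 1 then 1 else 0)
    (a : ℝ) (ha : a ∈ I) :
    ∀ f : ℝ → ℂ, ContDiffOn ℝ (n : ℕ∞) f I → ∀ x ∈ I,
      f x = (∑ β ∈ Finset.range n, iteratedDerivWithin β f I a *
              ∑ i ∈ Finset.range (n - β), c (i + β + 1) * iteratedDeriv i ωc (x - a))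
            + ∫ t in a..x,
                (∑ k ∈ Finset.range (n + 1), c k * iteratedDerivWithin k f I t)
                  * ωc (x - t) :=
  stmt_16_general I hI hconn n hn c hc ωc hωc hode hinit a ha
end

section
/- Let I ⊆ ℝ be an open interval, a_1 ≠ a_2 points of I. Then for every twice continuously differentiable f : I → ℝ and every x ∈ I: f(x) = (f(a_1) + ∫_{a_1}^x (f''(t) − f(t)) sinh(a_1 − t) dt) · sinh(x−a_2)/sinh(a_1−a_2) + (f(a_2) + ∫_{a_2}^x (f''(t) − f(t)) sinh(a_2 − t) dt) · sinh(x−a_1)/sinh(a_2−a_1). -/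
/-!
For a point `a`, the function `t ↦ f' t * sinh (a - t) + f t * cosh (a - t)` has derivative
`(f'' t - f t) * sinh (a - t)` and equals `f a` at `t = a`, so by the fundamental theorem of calculus
the bracket attached to the node `a` is `f' x * sinh (a - x) + f x * cosh (a - x)`. Combining the two
brackets with the weights `sinh (x - a₂) / sinh (a₁ - a₂)` and `sinh (x - a₁) / sinh (a₂ - a₁)`, the
`f' x` terms cancel and the `f x` terms add up to `f x` by the addition formula for `sinh`.
-/

open intervalIntegral Real Set

theorem sinh_cosh_interpolation {a₁ a₂ : ℝ} (h : a₁ ≠ a₂) (x d y : ℝ) :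
    y = (d * sinh (a₁ - x) + y * cosh (a₁ - x)) * (sinh (x - a₂) / sinh (a₁ - a₂))
      + (d * sinh (a₂ - x) + y * cosh (a₂ - x)) * (sinh (x - a₁) / sinh (a₂ - a₁)) := by
  have hs : sinh (a₁ - a₂) ≠ 0 := sinh_ne_zero.2 (sub_ne_zero.2 h)
  have hadd : sinh (a₁ - a₂) = sinh (a₁ - x) * cosh (x - a₂) + cosh (a₁ - x) * sinh (x - a₂) := by
    rw [← sinh_add]; ring_nf
  rw [show a₂ - a₁ = -(a₁ - a₂) by ring, show a₂ - x = -(x - a₂) by ring,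
    show x - a₁ = -(a₁ - x) by ring, sinh_neg, sinh_neg, sinh_neg, cosh_neg]
  field_simp
  linear_combination y * hadd

theorem add_integral_sub_mul_sinh_eq {f f' f'' : ℝ → ℝ} {a x : ℝ}
    (hf : ∀ t ∈ uIcc a x, HasDerivAt f (f' t) t)
    (hf' : ∀ t ∈ uIcc a x, HasDerivAt f' (f'' t) t)
    (hf'' : IntervalIntegrable f'' MeasureTheory.volume a x) :
    f a + ∫ t in a..x, (f'' t - f t) * sinh (a - t) = f' x * sinh (a - x) + f x * cosh (a - x) := by
  have hderiv : ∀ t ∈ uIcc a x, HasDerivAt (fun s => f' s * sinh (a - s) + f s * cosh (a - s))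
      ((f'' t - f t) * sinh (a - t)) t := by
    intro t ht
    have hsub : HasDerivAt (fun s => a - s) (-1) t := (hasDerivAt_id t).const_sub a
    exact (((hf' t ht).mul hsub.sinh).add ((hf t ht).mul hsub.cosh)).congr_deriv (by ring)
  have hcont : ContinuousOn f (uIcc a x) := fun t ht => (hf t ht).continuousAt.continuousWithinAt
  have hint : IntervalIntegrable (fun t => (f'' t - f t) * sinh (a - t)) MeasureTheory.volume a x :=
    (hf''.sub hcont.intervalIntegrable).mul_continuousOn (by fun_prop)
  rw [integral_eq_sub_of_hasDerivAt hderiv hint]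
  simp

theorem ContDiffOn.add_integral_iteratedDerivWithin_two_sub_mul_sinh_eq {I : Set ℝ} (hI : IsOpen I)
    (hconn : I.OrdConnected) {f : ℝ → ℝ} (hf : ContDiffOn ℝ 2 f I) {a x : ℝ} (ha : a ∈ I)
    (hx : x ∈ I) :
    f a + ∫ t in a..x, (iteratedDerivWithin 2 f I t - f t) * Real.sinh (a - t)
      = deriv f x * Real.sinh (a - x) + f x * Real.cosh (a - x) := by
  have hsub : uIcc a x ⊆ I := hconn.uIcc_subset ha hx
  have hf' : ContDiffOn ℝ 1 (deriv f) I := hf.deriv_of_isOpen hI (by norm_num)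
  refine add_integral_sub_mul_sinh_eq (fun t ht => ?_) (fun t ht => ?_)
    ((hf.continuousOn_iteratedDerivWithin le_rfl hI.uniqueDiffOn).mono hsub).intervalIntegrable
  · exact (hf.differentiableOn two_ne_zero |>.differentiableAt (hI.mem_nhds (hsub ht))).hasDerivAt
  · rw [iteratedDerivWithin_of_isOpen_eq_iterate hI (hsub ht), Function.iterate_succ_apply',
      Function.iterate_one]
    exact (hf'.differentiableOn one_ne_zero |>.differentiableAt (hI.mem_nhds (hsub ht))).hasDerivAt

theorem stmt_17_general (I : Set ℝ) (hI : IsOpen I) (hconn : I.OrdConnected)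
    (a1 a2 : ℝ) (ha1 : a1 ∈ I) (ha2 : a2 ∈ I) (hne12 : a1 ≠ a2) :
    ∀ f : ℝ → ℝ, ContDiffOn ℝ 2 f I → ∀ x ∈ I,
      f x = (f a1 + ∫ t in a1..x,
                (iteratedDerivWithin 2 f I t - f t) * Real.sinh (a1 - t))
              * (Real.sinh (x - a2) / Real.sinh (a1 - a2))
            + (f a2 + ∫ t in a2..x,
                (iteratedDerivWithin 2 f I t - f t) * Real.sinh (a2 - t))
              * (Real.sinh (x - a1) / Real.sinh (a2 - a1)) := by
  intro f hf x hx
  rw [hf.add_integral_iteratedDerivWithin_two_sub_mul_sinh_eq hI hconn ha1 hx,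
    hf.add_integral_iteratedDerivWithin_two_sub_mul_sinh_eq hI hconn ha2 hx]
  exact sinh_cosh_interpolation hne12 x (deriv f x) (f x)

theorem stmt_17 (I : Set ℝ) (hI : IsOpen I) (hne : I.Nonempty) (hconn : I.OrdConnected)
    (a1 a2 : ℝ) (ha1 : a1 ∈ I) (ha2 : a2 ∈ I) (hne12 : a1 ≠ a2) :
    ∀ f : ℝ → ℝ, ContDiffOn ℝ 2 f I → ∀ x ∈ I,
      f x = (f a1 + ∫ t in a1..x,
                (iteratedDerivWithin 2 f I t - f t) * Real.sinh (a1 - t))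
              * (Real.sinh (x - a2) / Real.sinh (a1 - a2))
            + (f a2 + ∫ t in a2..x,
                (iteratedDerivWithin 2 f I t - f t) * Real.sinh (a2 - t))
              * (Real.sinh (x - a1) / Real.sinh (a2 - a1)) :=
  stmt_17_general I hI hconn a1 a2 ha1 ha2 hne12
end

section
/- Let I ⊆ ℝ be an open interval, a_1, a_2 ∈ I with sin(a_1 − a_2) ≠ 0. Then for every twice continuously differentiable f : I → ℝ and every x ∈ I: f(x) = (f(a_1) + ∫_{a_1}^x (f''(t) + f(t)) sin(a_1 − t) dt) · sin(x−a_2)/sin(a_1−a_2) + (f(a_2) + ∫_{a_2}^x (f''(t) + f(t)) sin(a_2 − t) dt) · sin(x−a_1)/sin(a_2−a_1). -/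
/-! Both bracketed terms equal `g(aᵢ)`, where `g(t) = f'(x) sin(t - x) + f(x) cos(t - x)` is the
solution of `g'' + g = 0` with the same value and slope as `f` at `x`: the integrand
`(f'' + f)(t) sin(a - t)` is the derivative of `f'(t) sin(a - t) + f(t) cos(a - t)`. The formula
is then the Lagrange-type interpolation of `g ∈ span {sin, cos}` from its values at `a₁, a₂`,
which is exact since `sin (a₁ - a₂) ≠ 0`. -/

open intervalIntegral Real

theorem ContDiffOn.hasDerivAt_iteratedDerivWithin {f : ℝ → ℝ} {s : Set ℝ} {m : WithTop ℕ∞}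
    {n : ℕ} {t : ℝ} (hf : ContDiffOn ℝ m f s) (hs : IsOpen s) (hn : n < m) (ht : t ∈ s) :
    HasDerivAt (iteratedDerivWithin n f s) (iteratedDerivWithin (n + 1) f s t) t := by
  rw [iteratedDerivWithin_succ, derivWithin_of_isOpen hs ht]
  exact ((hf.differentiableOn_iteratedDerivWithin hn hs.uniqueDiffOn).differentiableAt
    (hs.mem_nhds ht)).hasDerivAt

theorem integral_add_deriv_two_mul_sin_sub {f f' f'' : ℝ → ℝ} {a x : ℝ}
    (hf : ∀ t ∈ Set.uIcc a x, HasDerivAt f (f' t) t)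
    (hf' : ∀ t ∈ Set.uIcc a x, HasDerivAt f' (f'' t) t)
    (hf'' : IntervalIntegrable f'' MeasureTheory.volume a x) :
    f a + ∫ t in a..x, (f'' t + f t) * sin (a - t) = f' x * sin (a - x) + f x * cos (a - x) := by
  have hprimitive : ∀ t ∈ Set.uIcc a x,
      HasDerivAt (fun t => f' t * sin (a - t) + f t * cos (a - t))
        ((f'' t + f t) * sin (a - t)) t := by
    intro t ht
    have hsin : HasDerivAt (fun t => sin (a - t)) (-cos (a - t)) t := by
      simpa using ((hasDerivAt_id t).const_sub a).sin
    have hcos : HasDerivAt (fun t => cos (a - t)) (sin (a - t)) t := by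
      simpa using ((hasDerivAt_id t).const_sub a).cos
    exact (((hf' t ht).mul hsin).add ((hf t ht).mul hcos)).congr_deriv (by ring)
  have hf_cont : ContinuousOn f (Set.uIcc a x) := fun t ht =>
    (hf t ht).continuousAt.continuousWithinAt
  have hintegrable : IntervalIntegrable (fun t => (f'' t + f t) * sin (a - t))
      MeasureTheory.volume a x :=
    (hf''.add hf_cont.intervalIntegrable).mul_continuousOn (by fun_prop)
  rw [integral_eq_sub_of_hasDerivAt hprimitive hintegrable]
  simp only [sub_self, sin_zero, cos_zero]
  ring

theorem integral_add_iteratedDerivWithin_two_mul_sin_sub {f : ℝ → ℝ} {I : Set ℝ} {a x : ℝ}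
    (hI : IsOpen I) (hconn : I.OrdConnected) (hf : ContDiffOn ℝ 2 f I) (ha : a ∈ I)
    (hx : x ∈ I) :
    f a + ∫ t in a..x, (iteratedDerivWithin 2 f I t + f t) * sin (a - t)
      = iteratedDerivWithin 1 f I x * sin (a - x) + f x * cos (a - x) := by
  have hsub : Set.uIcc a x ⊆ I := hconn.uIcc_subset ha hx
  have hf0 : ∀ t ∈ Set.uIcc a x, HasDerivAt f (iteratedDerivWithin 1 f I t) t := fun t ht => by
    simpa using hf.hasDerivAt_iteratedDerivWithin hI (n := 0) (by norm_num) (hsub ht)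
  have hf1 : ∀ t ∈ Set.uIcc a x,
      HasDerivAt (iteratedDerivWithin 1 f I) (iteratedDerivWithin 2 f I t) t := fun t ht =>
    hf.hasDerivAt_iteratedDerivWithin hI (by norm_num) (hsub ht)
  exact integral_add_deriv_two_mul_sin_sub hf0 hf1
    ((hf.continuousOn_iteratedDerivWithin le_rfl hI.uniqueDiffOn).mono hsub).intervalIntegrable

theorem sin_cos_interpolation (c d x a₁ a₂ : ℝ) (h : sin (a₁ - a₂) ≠ 0) :
    (c * sin (a₁ - x) + d * cos (a₁ - x)) * (sin (x - a₂) / sin (a₁ - a₂))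
      + (c * sin (a₂ - x) + d * cos (a₂ - x)) * (sin (x - a₁) / sin (a₂ - a₁)) = d := by
  have hsin : sin (a₁ - a₂) = sin (x - a₂) * cos (x - a₁) - cos (x - a₂) * sin (x - a₁) := by
    rw [← sin_sub]; ring_nf
  rw [show a₂ - a₁ = -(a₁ - a₂) by ring, show a₁ - x = -(x - a₁) by ring,
    show a₂ - x = -(x - a₂) by ring, sin_neg, sin_neg, sin_neg, cos_neg, cos_neg]
  field_simp
  rw [hsin]
  ring

theorem stmt_18_general (I : Set ℝ) (hI : IsOpen I) (hconn : I.OrdConnected)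
    (a1 a2 : ℝ) (ha1 : a1 ∈ I) (ha2 : a2 ∈ I) (hsin : Real.sin (a1 - a2) ≠ 0) :
    ∀ f : ℝ → ℝ, ContDiffOn ℝ 2 f I → ∀ x ∈ I,
      f x = (f a1 + ∫ t in a1..x,
                (iteratedDerivWithin 2 f I t + f t) * Real.sin (a1 - t))
              * (Real.sin (x - a2) / Real.sin (a1 - a2))
            + (f a2 + ∫ t in a2..x,
                (iteratedDerivWithin 2 f I t + f t) * Real.sin (a2 - t))
              * (Real.sin (x - a1) / Real.sin (a2 - a1)) := by
  intro f hf x hx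
  rw [integral_add_iteratedDerivWithin_two_mul_sin_sub hI hconn hf ha1 hx,
    integral_add_iteratedDerivWithin_two_mul_sin_sub hI hconn hf ha2 hx,
    sin_cos_interpolation _ _ _ _ _ hsin]

theorem stmt_18 (I : Set ℝ) (hI : IsOpen I) (hne : I.Nonempty) (hconn : I.OrdConnected)
    (a1 a2 : ℝ) (ha1 : a1 ∈ I) (ha2 : a2 ∈ I) (hsin : Real.sin (a1 - a2) ≠ 0) :
    ∀ f : ℝ → ℝ, ContDiffOn ℝ 2 f I → ∀ x ∈ I,
      f x = (f a1 + ∫ t in a1..x,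
                (iteratedDerivWithin 2 f I t + f t) * Real.sin (a1 - t))
              * (Real.sin (x - a2) / Real.sin (a1 - a2))
            + (f a2 + ∫ t in a2..x,
                (iteratedDerivWithin 2 f I t + f t) * Real.sin (a2 - t))
              * (Real.sin (x - a1) / Real.sin (a2 - a1)) :=
  stmt_18_general I hI hconn a1 a2 ha1 ha2 hsin
end

section
/- Let I ⊆ ℝ be an open interval, n ≥ 1, and a_1,...,a_n pairwise distinct points of I. Then for every n-times continuously differentiable f : I → ℝ and every x ∈ I: f(x) = Σ_{α=1}^n (f(a_α) + ∫_{a_α}^x f^(n)(t) (a_α − t)^{n-1}/(n−1)! dt) · Π_{j≠α} (x − a_j)/(a_α − a_j). -/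
open Finset intervalIntegral Polynomial Nat

/-! By Taylor's theorem with integral remainder, `f a + ∫_a^x f⁽ⁿ⁾(t) (a - t)ⁿ⁻¹ / (n - 1)! dt` is
the value at `a` of the Taylor polynomial of `f` of degree `n - 1` centred at `x`. Lagrange
interpolation at `n` distinct nodes reproduces a polynomial of degree `< n` exactly, and evaluating
this Taylor polynomial at its centre `x` gives `f x`. -/

theorem Lagrange.eval_eq_sum_eval_mul_prod {F ι : Type*} [Field F] [DecidableEq ι]
    {s : Finset ι} {v : ι → F} (hvs : Set.InjOn v s) {P : F[X]} (hP : P.degree < #s) (x : F) :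
    P.eval x = ∑ i ∈ s, P.eval (v i) * ∏ j ∈ s.erase i, (x - v j) / (v i - v j) := by
  conv_lhs => rw [Lagrange.eq_interpolate hvs hP]
  simp only [Lagrange.interpolate_apply, eval_finsetSum, eval_mul, eval_C, Lagrange.basis,
    eval_prod, Lagrange.basisDivisor]
  simp [div_eq_mul_inv, mul_comm]

theorem exists_polynomial_eval_eq_taylorWithinEval (f : ℝ → ℝ) (m : ℕ) (s : Set ℝ) (x₀ : ℝ) :
    ∃ P : ℝ[X], P.degree < (m + 1 : ℕ) ∧ ∀ y, P.eval y = taylorWithinEval f m s x₀ y := by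
  refine ⟨∑ k ∈ range (m + 1), C ((k ! : ℝ)⁻¹ * iteratedDerivWithin k f s x₀) * (X - C x₀) ^ k,
    mem_degreeLT.mp (sum_mem fun k hk => mem_degreeLT.mpr ?_), fun y => ?_⟩
  · have hk : (k : WithBot ℕ) < (m + 1 : ℕ) := by exact_mod_cast mem_range.mp hk
    refine lt_of_le_of_lt ?_ hk
    compute_degree!
  · simp only [taylor_within_apply, eval_finsetSum, eval_mul, eval_C, eval_pow, eval_sub, eval_X,
      smul_eq_mul]
    exact sum_congr rfl fun k _ => by ring

theorem iteratedDerivWithin_eq_of_subset {𝕜 E : Type*} [NontriviallyNormedField 𝕜]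
    [NormedAddCommGroup E] [NormedSpace 𝕜 E] {f : 𝕜 → E} {s t : Set 𝕜} {k : ℕ} {y : 𝕜}
    (hst : s ⊆ t) (hs : UniqueDiffOn 𝕜 s) (ht : UniqueDiffOn 𝕜 t) (hf : ContDiffOn 𝕜 k f t)
    (hy : y ∈ s) :
    iteratedDerivWithin k f s y = iteratedDerivWithin k f t y := by
  simp only [iteratedDerivWithin_eq_iteratedFDerivWithin,
    iteratedFDerivWithin_subset hst hs ht hf hy]

section Taylor

variable {E : Type*} [NormedAddCommGroup E] [NormedSpace ℝ E]

theorem taylorWithinEval_eq_of_subset {f : ℝ → E} {s t : Set ℝ} {m : ℕ} {x₀ : ℝ} (hst : s ⊆ t)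
    (hs : UniqueDiffOn ℝ s) (ht : UniqueDiffOn ℝ t) (hf : ContDiffOn ℝ m f t) (hx₀ : x₀ ∈ s) :
    taylorWithinEval f m s x₀ = taylorWithinEval f m t x₀ := by
  ext y
  simp only [taylor_within_apply]
  refine sum_congr rfl fun k hk => ?_
  rw [iteratedDerivWithin_eq_of_subset hst hs ht
    (hf.of_le (by exact_mod_cast Nat.lt_succ_iff.mp (mem_range.mp hk))) hx₀]

theorem taylorWithinEval_eq_add_integral [CompleteSpace E] {f : ℝ → E} {s : Set ℝ} {m : ℕ}
    {x₀ x : ℝ} (hs : UniqueDiffOn ℝ s) (hf : ContDiffOn ℝ (m + 1 : ℕ) f s)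
    (hsub : Set.uIcc x₀ x ⊆ s) :
    taylorWithinEval f m s x₀ x =
      f x + ∫ t in x..x₀, ((x - t) ^ m / m !) • iteratedDerivWithin (m + 1) f s t := by
  rcases eq_or_ne x₀ x with rfl | hne
  · simp [taylorWithinEval_self]
  have hI : UniqueDiffOn ℝ (Set.uIcc x₀ x) := uniqueDiffOn_uIcc hne
  have h := taylor_integral_remainder (hf.mono hsub)
  rw [taylorWithinEval_eq_of_subset hsub hI hs (hf.of_le (by norm_cast; omega)) Set.left_mem_uIcc,
    integral_congr fun t ht => by rw [iteratedDerivWithin_eq_of_subset hsub hI hs hf ht]] at h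
  rw [integral_symm, ← h]
  abel

end Taylor

theorem stmt_19_general (I : Set ℝ) (hI : IsOpen I) (hconn : I.OrdConnected)
    (n : ℕ) (hn : 1 ≤ n) (a : Fin n → ℝ) (hinj : Function.Injective a)
    (haI : ∀ α, a α ∈ I) :
    ∀ f : ℝ → ℝ, ContDiffOn ℝ (n : ℕ∞) f I → ∀ x ∈ I,
      f x = ∑ α : Fin n,
        (f (a α) + ∫ t in (a α)..x,
            iteratedDerivWithin n f I t * (a α - t) ^ (n - 1)
              / (Nat.factorial (n - 1) : ℝ))
          * ∏ j ∈ Finset.univ.erase α, (x - a j) / (a α - a j) := by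
  obtain ⟨m, rfl⟩ : ∃ m, n = m + 1 := ⟨n - 1, by omega⟩
  intro f hf x hx
  obtain ⟨P, hPdeg, hP⟩ := exists_polynomial_eval_eq_taylorWithinEval f m I x
  have hP_node : ∀ α, P.eval (a α) = f (a α) + ∫ t in (a α)..x,
      iteratedDerivWithin (m + 1) f I t * (a α - t) ^ (m + 1 - 1) / ((m + 1 - 1)! : ℝ) := by
    intro α
    rw [hP, taylorWithinEval_eq_add_integral hI.uniqueDiffOn hf (hconn.uIcc_subset hx (haI α))]
    simp only [Nat.add_sub_cancel, smul_eq_mul]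
    congr 1
    exact integral_congr fun t _ => by ring
  calc f x = P.eval x := by rw [hP, taylorWithinEval_self]
    _ = ∑ α, P.eval (a α) * ∏ j ∈ univ.erase α, (x - a j) / (a α - a j) :=
      Lagrange.eval_eq_sum_eval_mul_prod hinj.injOn (by simpa using hPdeg) x
    _ = _ := by simp only [hP_node]

theorem stmt_19 (I : Set ℝ) (hI : IsOpen I) (hne : I.Nonempty) (hconn : I.OrdConnected)
    (n : ℕ) (hn : 1 ≤ n) (a : Fin n → ℝ) (hinj : Function.Injective a)
    (haI : ∀ α, a α ∈ I) :
    ∀ f : ℝ → ℝ, ContDiffOn ℝ (n : ℕ∞) f I → ∀ x ∈ I,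
      f x = ∑ α : Fin n,
        (f (a α) + ∫ t in (a α)..x,
            iteratedDerivWithin n f I t * (a α - t) ^ (n - 1)
              / (Nat.factorial (n - 1) : ℝ))
          * ∏ j ∈ Finset.univ.erase α, (x - a j) / (a α - a j) :=
  stmt_19_general I hI hconn n hn a hinj haI
end
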